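/- arXiv:2005.04898 — 9 statements merged into one kernel-verified Lean document; each statement's English description precedes it below -/
import Mathlib

section
/- For all reals g > 0 and h, h_K > 0, the shock-branch value dominates the rarefaction-branch value: √((g/2)(h + h_K)(h − h_K)²/(h h_K)) ≥ 2(√(g h) − √(g h_K)). -/
/-! Writing a = √h and b = √h_K, both sides carry the factor √g |a - b|; after squaring, the claim
reduces to (a² + b²)(a + b)² ≥ 8a²b², the product of the AM-GM inequalities a² + b² ≥ 2ab and
(a + b)² ≥ 4ab. -/

open Real

theorem eight_mul_sq_mul_sq_sub_le {a b : ℝ} (ha : 0 ≤ a) (hb : 0 ≤ b) :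
    8 * (a * b) ^ 2 * (a - b) ^ 2 ≤ (a ^ 2 + b ^ 2) * (a ^ 2 - b ^ 2) ^ 2 := by
  have amgm₁ : 2 * (a * b) ≤ a ^ 2 + b ^ 2 := by nlinarith [sq_nonneg (a - b)]
  have amgm₂ : 4 * (a * b) ≤ (a + b) ^ 2 := by nlinarith [sq_nonneg (a - b)]
  calc 8 * (a * b) ^ 2 * (a - b) ^ 2
      = (2 * (a * b)) * (4 * (a * b)) * (a - b) ^ 2 := by ring
    _ ≤ (a ^ 2 + b ^ 2) * (a + b) ^ 2 * (a - b) ^ 2 := by gcongr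
    _ = (a ^ 2 + b ^ 2) * (a ^ 2 - b ^ 2) ^ 2 := by ring

theorem sq_two_mul_sqrt_sub_le {g h hK : ℝ} (hg : 0 ≤ g) (hh : 0 < h) (hhK : 0 < hK) :
    (2 * (√(g * h) - √(g * hK))) ^ 2 ≤ g / 2 * (h + hK) * (h - hK) ^ 2 / (h * hK) := by
  obtain ⟨a, ha, rfl⟩ : ∃ a, 0 < a ∧ h = a ^ 2 := ⟨√h, sqrt_pos.2 hh, (sq_sqrt hh.le).symm⟩
  obtain ⟨b, hb, rfl⟩ : ∃ b, 0 < b ∧ hK = b ^ 2 := ⟨√hK, sqrt_pos.2 hhK, (sq_sqrt hhK.le).symm⟩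
  rw [sqrt_mul hg, sqrt_mul hg, sqrt_sq ha.le, sqrt_sq hb.le, le_div_iff₀ (by positivity)]
  calc (2 * (√g * a - √g * b)) ^ 2 * (a ^ 2 * b ^ 2)
      = g / 2 * (8 * (a * b) ^ 2 * (a - b) ^ 2) := by
        linear_combination 4 * (a - b) ^ 2 * (a * b) ^ 2 * sq_sqrt hg
    _ ≤ g / 2 * ((a ^ 2 + b ^ 2) * (a ^ 2 - b ^ 2) ^ 2) :=
        mul_le_mul_of_nonneg_left (eight_mul_sq_mul_sq_sub_le ha.le hb.le) (by positivity)
    _ = _ := by ring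

/-- For the shallow water equations: the shock-branch value dominates the
rarefaction-branch value:
`√((g/2)(h + h_K)(h − h_K)²/(h h_K)) ≥ 2(√(g h) − √(g h_K))`. -/
theorem swe_shock_branch_dominates (g h hK : ℝ) (hg : 0 < g) (hh : 0 < h) (hhK : 0 < hK) :
    Real.sqrt ((g / 2) * (h + hK) * (h - hK) ^ 2 / (h * hK))
      ≥ 2 * (Real.sqrt (g * h) - Real.sqrt (g * hK)) :=
  (le_abs_self _).trans (abs_le_sqrt (sq_two_mul_sqrt_sub_le hg.le hh hhK))
end

section
/- For any g > 0 and h_K > 0, the shallow water wave-curve branch function f_K, defined by f_K(h) = 2(√(g h) − √(g h_K)) for 0 < h ≤ h_K and f_K(h) = √((g/2)(h + h_K)(h − h_K)²/(h h_K)) for h > h_K, is concave on (0, ∞). -/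
/-!
On `(0, ∞)` both branches vanish at `hK` with the common slope `√(g / hK)`, so the branch
function is differentiable there and it suffices that its derivative is antitone. On the
rarefaction side the derivative is `√g / √h`. On the shock side, in terms of
`s = √(1 + hK / h)`, which decreases in `h` and stays `≥ 1`, it is
`√(g / (2 hK)) (s³ - s + 2 / s) / 2`, and `s³ - s + 2 / s` is increasing on `[1, ∞)`.
-/

/-- Shallow water wave-curve branch function for a state with depth `hK`:
rarefaction branch for `h ≤ hK`, shock branch for `h > hK`. -/
noncomputable def sweBranch (g hK h : ℝ) : ℝ :=
  if h ≤ hK then 2 * (Real.sqrt (g * h) - Real.sqrt (g * hK))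
  else Real.sqrt ((g / 2) * (h + hK) * (h - hK) ^ 2 / (h * hK))

open Real Set

theorem hasDerivAt_ite_le {u v u' v' : ℝ → ℝ} {a x : ℝ}
    (hu : x ≤ a → HasDerivAt u (u' x) x) (hv : a ≤ x → HasDerivAt v (v' x) x)
    (h_eq : u a = v a) (h_deriv_eq : u' a = v' a) :
    HasDerivAt (fun y => if y ≤ a then u y else v y) (if x ≤ a then u' x else v' x) x := by
  rcases lt_trichotomy x a with hxa | rfl | hax
  · rw [if_pos hxa.le]
    refine (hu hxa.le).congr_of_eventuallyEq ?_
    filter_upwards [Iio_mem_nhds hxa] with y hy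
    exact if_pos (le_of_lt hy)
  · rw [if_pos le_rfl]
    have hleft : HasDerivWithinAt (fun y => if y ≤ x then u y else v y) (u' x) (Iic x) x :=
      (hu le_rfl).hasDerivWithinAt.congr (fun y hy => if_pos hy) (if_pos le_rfl)
    have hright : HasDerivWithinAt (fun y => if y ≤ x then u y else v y) (u' x) (Ici x) x := by
      refine h_deriv_eq ▸ (hv le_rfl).hasDerivWithinAt.congr (fun y hy => ?_) (by simp [h_eq])
      rcases eq_or_lt_of_le (mem_Ici.mp hy) with rfl | hlt
      · simp [h_eq]
      · exact if_neg (not_le.mpr hlt)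
    simpa [Iic_union_Ici, hasDerivWithinAt_univ] using hleft.union hright
  · rw [if_neg (not_le.mpr hax)]
    refine (hv hax.le).congr_of_eventuallyEq ?_
    filter_upwards [Ioi_mem_nhds hax] with y hy
    exact if_neg (not_le.mpr hy)

theorem concaveOn_of_hasDerivAt_of_antitoneOn {D : Set ℝ} (hD_open : IsOpen D)
    (hD : Convex ℝ D) {f f' : ℝ → ℝ} (hf : ∀ x ∈ D, HasDerivAt f (f' x) x)
    (hf' : AntitoneOn f' D) : ConcaveOn ℝ D f := by
  refine AntitoneOn.concaveOn_of_deriv hD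
    (fun x hx => (hf x hx).continuousAt.continuousWithinAt) ?_ ?_ <;> rw [hD_open.interior_eq]
  · exact fun x hx => (hf x hx).differentiableAt.differentiableWithinAt
  · exact hf'.congr fun x hx => ((hf x hx).deriv).symm

theorem monotoneOn_cube_sub_add_two_div :
    MonotoneOn (fun s : ℝ => s ^ 3 - s + 2 / s) (Ici 1) := by
  intro a (ha : 1 ≤ a) b (hb : 1 ≤ b) hab
  have hab1 : 1 ≤ a * b := one_le_mul_of_one_le_of_one_le ha hb
  have key : b ^ 3 - b + 2 / b - (a ^ 3 - a + 2 / a)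
      = (b - a) * (a ^ 2 + a * b + b ^ 2 - 1 - 2 / (a * b)) := by
    field_simp
    ring
  have h2 : 2 / (a * b) ≤ 2 := div_le_self zero_le_two hab1
  have hprod : 0 ≤ (b - a) * (a ^ 2 + a * b + b ^ 2 - 1 - 2 / (a * b)) :=
    mul_nonneg (sub_nonneg.mpr hab) (by nlinarith)
  linarith

section ShallowWater

variable {g hK : ℝ}

noncomputable def sweRarefaction (g hK h : ℝ) : ℝ := 2 * (√(g * h) - √(g * hK))

noncomputable def sweShock (g hK h : ℝ) : ℝ := √(g / (2 * hK)) * ((h - hK) * √(1 + hK / h))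

/-- The derivative of `sweShock`, written through `s = √(1 + hK / h)`: the identity
`(h - hK) hK / h² = (s² - 1)(2 - s²)` turns it into `√(g / (2 hK)) (s⁴ - s² + 2) / (2 s)`.
-/
noncomputable def sweShockSlope (g hK h : ℝ) : ℝ :=
  √(g / (2 * hK)) / 2 * (√(1 + hK / h) ^ 3 - √(1 + hK / h) + 2 / √(1 + hK / h))

theorem sweBranch_eq_ite (hhK : 0 < hK) (h : ℝ) :
    sweBranch g hK h = if h ≤ hK then sweRarefaction g hK h else sweShock g hK h := by
  unfold sweBranch
  split_ifs with hle
  · rfl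
  · have hh : 0 < h := hhK.trans (not_le.mp hle)
    have harg : (g / 2) * (h + hK) * (h - hK) ^ 2 / (h * hK)
        = (h - hK) ^ 2 * (g / (2 * hK) * (1 + hK / h)) := by
      field_simp
    rw [harg, sqrt_mul (sq_nonneg _), sqrt_sq (by linarith), sqrt_mul' _ (by positivity),
      sweShock]
    ring

theorem hasDerivAt_sweRarefaction (hg : 0 ≤ g) {x : ℝ} (hx : 0 < x) :
    HasDerivAt (sweRarefaction g hK) (√g / √x) x := by
  have hsqrt : HasDerivAt (fun h => √h) (1 / (2 * √x)) x := hasDerivAt_sqrt hx.ne'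
  have hfun : sweRarefaction g hK = fun h => 2 * (√g * √h - √(g * hK)) := by
    funext h
    rw [sweRarefaction, sqrt_mul hg]
  rw [hfun]
  refine (((hsqrt.const_mul √g).sub_const √(g * hK)).const_mul 2).congr_deriv ?_
  field_simp

theorem hasDerivAt_sweShock (hhK : 0 < hK) {x : ℝ} (hx : 0 < x) :
    HasDerivAt (sweShock g hK) (sweShockSlope g hK x) x := by
  have hσ : HasDerivAt (fun h => √(1 + hK / h)) (-(hK / x ^ 2) / (2 * √(1 + hK / x))) x := by
    have := ((hasDerivAt_inv hx.ne').const_mul hK).const_add 1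
    simpa [div_eq_mul_inv] using this.sqrt (by positivity)
  set s := √(1 + hK / x) with hs
  have hs_sq : s ^ 2 = 1 + hK / x := sq_sqrt (by positivity)
  have hs_pos : 0 < s := sqrt_pos.mpr (by positivity)
  have hS : HasDerivAt (sweShock g hK)
      (√(g / (2 * hK)) * (1 * s + (x - hK) * (-(hK / x ^ 2) / (2 * s)))) x :=
    (((hasDerivAt_id' x).sub_const hK).mul hσ).const_mul _
  refine hS.congr_deriv ?_
  have hquot : (x - hK) * (hK / x ^ 2) = (s ^ 2 - 1) * (2 - s ^ 2) := by
    rw [hs_sq]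
    field_simp
    ring
  have hcorr : (x - hK) * (-(hK / x ^ 2) / (2 * s)) = -((s ^ 2 - 1) * (2 - s ^ 2)) / (2 * s) := by
    rw [← hquot]
    ring
  rw [sweShockSlope, ← hs, hcorr]
  field_simp
  ring

theorem sweShockSlope_self (hg : 0 ≤ g) (hhK : 0 < hK) :
    sweShockSlope g hK hK = √g / √hK := by
  have h2 : √2 ^ 2 = 2 := sq_sqrt zero_le_two
  have hc : √(g / (2 * hK)) = √g / (√2 * √hK) := by
    rw [sqrt_div hg, sqrt_mul zero_le_two]
  rw [sweShockSlope, div_self hhK.ne', one_add_one_eq_two, hc]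
  field_simp
  linear_combination (√g * √2 ^ 2 - √g) * h2

theorem antitoneOn_sweShockSlope (hhK : 0 < hK) : AntitoneOn (sweShockSlope g hK) (Ioi 0) := by
  intro x (hx : 0 < x) y (hy : 0 < y) hxy
  have hσ : √(1 + hK / y) ≤ √(1 + hK / x) := by gcongr
  have hσ_one : 1 ≤ √(1 + hK / y) := one_le_sqrt.mpr (le_add_of_nonneg_right (by positivity))
  exact mul_le_mul_of_nonneg_left
    (monotoneOn_cube_sub_add_two_div hσ_one (hσ_one.trans hσ) hσ) (by positivity)

end ShallowWater

/-- The shallow water wave-curve branch function is concave on `(0, ∞)`. -/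
theorem swe_branch_concave (g hK : ℝ) (hg : 0 < g) (hhK : 0 < hK) :
    ConcaveOn ℝ (Set.Ioi (0 : ℝ)) (sweBranch g hK) := by
  have h_join : sweRarefaction g hK hK = sweShock g hK hK := by simp [sweRarefaction, sweShock]
  have h_slope_join := sweShockSlope_self hg.le hhK
  rw [show sweBranch g hK = _ from funext (sweBranch_eq_ite hhK)]
  refine concaveOn_of_hasDerivAt_of_antitoneOn isOpen_Ioi (convex_Ioi 0)
    (f' := fun x => if x ≤ hK then √g / √x else sweShockSlope g hK x)
    (fun x hx => hasDerivAt_ite_le (u' := fun x => √g / √x)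
      (fun _ => hasDerivAt_sweRarefaction hg.le hx)
      (fun _ => hasDerivAt_sweShock hhK hx) h_join h_slope_join.symm) ?_
  rw [← Ioc_union_Ici_eq_Ioi hhK]
  refine AntitoneOn.union_right ?_ ?_ (isGreatest_Ioc hhK) isLeast_Ici
  · refine AntitoneOn.congr (fun x hx y _ hxy => ?_) fun x hx => (if_pos hx.2).symm
    exact div_le_div_of_nonneg_left (sqrt_nonneg g) (sqrt_pos.mpr hx.1) (sqrt_le_sqrt hxy)
  · refine ((antitoneOn_sweShockSlope (g := g) hhK).mono (Ici_subset_Ioi.mpr hhK)).congr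
      fun x hx => ?_
    rcases eq_or_lt_of_le (mem_Ici.mp hx) with rfl | hlt
    · simp [h_slope_join]
    · exact (if_neg (not_le.mpr hlt)).symm
end

section
/- Let g > 0 and 0 < h_L < h_*, and suppose u_* = u_L − (h_* − h_L)√((g/2)(h_* + h_L)/(h_* h_L)) (the Rankine–Hugoniot jump relation across a left shock). Then u_* + √(g h_*) ≤ u_L + √(g h_L), i.e., the characteristic speed u_* + c_* in the star region is bounded above by u_L + c_L. -/
/-!
With `c = √(g h)` the depth jump factors as `h_* - h_L = (c_* - c_L) (c_* + c_L) / g`, so it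
suffices that `(c_* + c_L) √((g/2)(h_* + h_L)/(h_* h_L)) ≥ g`. After squaring this follows from
`(c_* + c_L)² ≥ c_*² + c_L² = g (h_* + h_L)` and `(h_* + h_L)² ≥ 2 h_* h_L`.
-/

lemma le_sqrt_add_sqrt_mul_sqrt_shock {g x y : ℝ} (hg : 0 ≤ g) (hx : 0 < x) (hy : 0 < y) :
    g ≤ (√(g * y) + √(g * x)) * √((g / 2) * (y + x) / (y * x)) := by
  have hsum : √(g * (y + x)) ≤ √(g * y) + √(g * x) := by
    rw [Real.sqrt_le_iff]
    refine ⟨by positivity, ?_⟩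
    have hcross : 0 ≤ √(g * y) * √(g * x) := by positivity
    nlinarith [Real.sq_sqrt (by positivity : 0 ≤ g * y), Real.sq_sqrt (by positivity : 0 ≤ g * x)]
  have hprod : g ≤ √(g * (y + x)) * √((g / 2) * (y + x) / (y * x)) := by
    rw [← Real.sqrt_mul (by positivity), Real.le_sqrt hg (by positivity), mul_div_assoc',
      le_div_iff₀ (by positivity)]
    nlinarith [mul_nonneg (sq_nonneg g) (add_nonneg (sq_nonneg x) (sq_nonneg y))]
  exact hprod.trans (mul_le_mul_of_nonneg_right hsum (Real.sqrt_nonneg _))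

lemma sqrt_mul_sub_sqrt_mul_le_shock {g x y : ℝ} (hg : 0 < g) (hx : 0 < x) (hxy : x ≤ y) :
    √(g * y) - √(g * x) ≤ (y - x) * √((g / 2) * (y + x) / (y * x)) := by
  have hcy : √(g * y) ^ 2 = g * y := Real.sq_sqrt (by nlinarith)
  have hcx : √(g * x) ^ 2 = g * x := Real.sq_sqrt (by positivity)
  have hdepth : y - x = (√(g * y) - √(g * x)) * (√(g * y) + √(g * x)) / g := by
    rw [eq_div_iff hg.ne']
    linear_combination hcx - hcy
  have hc : 0 ≤ √(g * y) - √(g * x) :=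
    sub_nonneg.2 (Real.sqrt_le_sqrt (mul_le_mul_of_nonneg_left hxy hg.le))
  calc √(g * y) - √(g * x) = (√(g * y) - √(g * x)) * g / g := by field_simp
    _ ≤ (√(g * y) - √(g * x)) * ((√(g * y) + √(g * x)) * √((g / 2) * (y + x) / (y * x))) / g := by
      gcongr
      exact le_sqrt_add_sqrt_mul_sqrt_shock hg.le hx (hx.trans_le hxy)
    _ = (y - x) * √((g / 2) * (y + x) / (y * x)) := by rw [hdepth]; ring

/-- Across a left shock of the shallow water equations (Rankine–Hugoniot jump
relation, `h_L < h_*`), the characteristic speed `u_* + c_*` in the star region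
is bounded above by `u_L + c_L`. -/
theorem swe_left_shock_characteristic_bound (g hL hstar uL ustar : ℝ)
    (hg : 0 < g) (hhL : 0 < hL) (hlt : hL < hstar)
    (hRH : ustar = uL - (hstar - hL) * Real.sqrt ((g / 2) * (hstar + hL) / (hstar * hL))) :
    ustar + Real.sqrt (g * hstar) ≤ uL + Real.sqrt (g * hL) := by
  rw [hRH]
  linarith [sqrt_mul_sub_sqrt_mul_le_shock hg hhL hlt.le]
end

section
/- For every real y > 0, the inequality (y − 1)(y^{3/2} − 1) ≥ 24 y (y^{1/4} − 1)² holds. -/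
/-!
Put `s = y^{1/8}`, so that `y = s⁸`, `y^{3/2} = s¹²` and `y^{1/4} = s²`. Factoring `x⁴ - 1` and
`x⁶ - 1` at `x = s²` as `(x - 1)` times a geometric sum, the inequality becomes
`(s² - 1)² G₄ G₆ ≥ 24 s⁸ (s² - 1)²` with `Gₙ = ∑_{i<n} s^{2i}`. By AM-GM on the pairs
`s^{2i} + s^{2(n-1-i)} ≥ 2 s^{n-1}` one has `Gₙ ≥ n s^{n-1}`, and `4 s³ · 6 s⁵ = 24 s⁸`.
-/

open Finset

section GeomSum

variable {R : Type*} [CommRing R] [LinearOrder R] [IsStrictOrderedRing R]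

lemma two_mul_pow_le_pow_sq_add_pow_sq (s : R) (i j : ℕ) :
    2 * s ^ (i + j) ≤ (s ^ 2) ^ i + (s ^ 2) ^ j := by
  rw [pow_add, pow_right_comm s 2 i, pow_right_comm s 2 j]
  linarith [sq_nonneg (s ^ i - s ^ j)]

lemma natCast_mul_pow_pred_le_geom_sum_sq (s : R) (n : ℕ) :
    n * s ^ (n - 1) ≤ ∑ i ∈ range n, (s ^ 2) ^ i := by
  have hpair : ∀ i ∈ range n, 2 * s ^ (n - 1) ≤ (s ^ 2) ^ i + (s ^ 2) ^ (n - 1 - i) := by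
    intro i hi
    have hi : i + (n - 1 - i) = n - 1 := by have := mem_range.mp hi; omega
    simpa [hi] using two_mul_pow_le_pow_sq_add_pow_sq s i (n - 1 - i)
  have hsum := sum_le_sum hpair
  rw [sum_add_distrib, sum_range_reflect (fun i ↦ (s ^ 2) ^ i) n, sum_const, card_range,
    nsmul_eq_mul] at hsum
  linarith

end GeomSum

lemma rpow_div_eight_eq_pow {y : ℝ} (hy : 0 ≤ y) (k : ℕ) :
    y ^ ((k : ℝ) / 8) = (y ^ ((1 : ℝ) / 8)) ^ k := by
  rw [← Real.rpow_mul_natCast hy, one_div_mul_eq_div]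

lemma pow_eight_sub_one_mul_pow_twelve_sub_one (s : ℝ) :
    (s ^ 8 - 1) * (s ^ 12 - 1) =
      (s ^ 2 - 1) ^ 2 * ((∑ i ∈ range 4, (s ^ 2) ^ i) * ∑ i ∈ range 6, (s ^ 2) ^ i) := by
  have h4 := geom_sum_mul (s ^ 2) 4
  have h6 := geom_sum_mul (s ^ 2) 6
  rw [← pow_mul] at h4 h6
  rw [← h4, ← h6]
  ring

/-- For every real `y > 0`, `(y − 1)(y^{3/2} − 1) ≥ 24 y (y^{1/4} − 1)²`. -/
theorem bfe_shock_dominates_rarefaction_reduced (y : ℝ) (hy : 0 < y) :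
    (y - 1) * (y ^ ((3 : ℝ) / 2) - 1) ≥ 24 * y * (y ^ ((1 : ℝ) / 4) - 1) ^ 2 := by
  set s := y ^ ((1 : ℝ) / 8)
  have hs : 0 ≤ s := Real.rpow_nonneg hy.le _
  have hy8 : y = s ^ 8 := by
    rw [← rpow_div_eight_eq_pow hy.le]; norm_num
  have hy12 : y ^ ((3 : ℝ) / 2) = s ^ 12 := by
    rw [← rpow_div_eight_eq_pow hy.le]; norm_num
  have hy2 : y ^ ((1 : ℝ) / 4) = s ^ 2 := by
    rw [← rpow_div_eight_eq_pow hy.le]; norm_num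
  have hG4 : 4 * s ^ 3 ≤ ∑ i ∈ range 4, (s ^ 2) ^ i := by
    exact_mod_cast natCast_mul_pow_pred_le_geom_sum_sq s 4
  have hG6 : 6 * s ^ 5 ≤ ∑ i ∈ range 6, (s ^ 2) ^ i := by
    exact_mod_cast natCast_mul_pow_pred_le_geom_sum_sq s 6
  rw [hy12, hy2, hy8, pow_eight_sub_one_mul_pow_twelve_sub_one]
  calc 24 * s ^ 8 * (s ^ 2 - 1) ^ 2 = (s ^ 2 - 1) ^ 2 * (4 * s ^ 3 * (6 * s ^ 5)) := by ring
    _ ≤ _ := mul_le_mul_of_nonneg_left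
        (mul_le_mul hG4 hG6 (by positivity) (hG4.trans' (by positivity))) (sq_nonneg _)
end

section
/- For every real y ≥ 0, the algebraic identity (y − 1)(y^{3/2} − 1) − 24 y (y^{1/4} − 1)² = (y^{1/4} − 1)⁴ (1 + 3 y^{1/4} + y^{1/2}) (1 + y^{1/4} + 6 y^{1/2} + y^{3/4} + y) holds; in particular the left-hand side is nonnegative for all y ≥ 0. -/
/-! Substituting `t = y^{1/4}` turns every power of `y` into a power of `t`, so the identity is a
polynomial factorization in `t`; for `t ≥ 0` its right-hand side is an even power of `t - 1` times
two positive factors. -/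

open Real

theorem pow_four_sub_one_mul_pow_six_sub_one_sub_factorization {R : Type*} [CommRing R] (t : R) :
    (t ^ 4 - 1) * (t ^ 6 - 1) - 24 * t ^ 4 * (t - 1) ^ 2
      = (t - 1) ^ 4 * (1 + 3 * t + t ^ 2) * (1 + t + 6 * t ^ 2 + t ^ 3 + t ^ 4) := by
  ring

/-- For every real `y ≥ 0`,
`(y − 1)(y^{3/2} − 1) − 24 y (y^{1/4} − 1)²
  = (y^{1/4} − 1)⁴ (1 + 3 y^{1/4} + y^{1/2})(1 + y^{1/4} + 6 y^{1/2} + y^{3/4} + y)`;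
in particular the left-hand side is nonnegative. -/
theorem bfe_shock_rarefaction_factorization (y : ℝ) (hy : 0 ≤ y) :
    (y - 1) * (y ^ ((3 : ℝ) / 2) - 1) - 24 * y * (y ^ ((1 : ℝ) / 4) - 1) ^ 2
      = (y ^ ((1 : ℝ) / 4) - 1) ^ 4 * (1 + 3 * y ^ ((1 : ℝ) / 4) + y ^ ((1 : ℝ) / 2))
          * (1 + y ^ ((1 : ℝ) / 4) + 6 * y ^ ((1 : ℝ) / 2) + y ^ ((3 : ℝ) / 4) + y) ∧
    0 ≤ (y - 1) * (y ^ ((3 : ℝ) / 2) - 1) - 24 * y * (y ^ ((1 : ℝ) / 4) - 1) ^ 2 := by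
  have ht : 0 ≤ y ^ ((1 : ℝ) / 4) := rpow_nonneg hy _
  have hy4 : y = (y ^ ((1 : ℝ) / 4)) ^ 4 := by rw [← rpow_mul_natCast hy]; norm_num
  have h2 : y ^ ((1 : ℝ) / 2) = (y ^ ((1 : ℝ) / 4)) ^ 2 := by
    rw [← rpow_mul_natCast hy]; norm_num
  have h3 : y ^ ((3 : ℝ) / 4) = (y ^ ((1 : ℝ) / 4)) ^ 3 := by
    rw [← rpow_mul_natCast hy]; norm_num
  have h6 : y ^ ((3 : ℝ) / 2) = (y ^ ((1 : ℝ) / 4)) ^ 6 := by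
    rw [← rpow_mul_natCast hy]; norm_num
  rw [h2, h3, h6]
  generalize y ^ ((1 : ℝ) / 4) = t at ht hy4 ⊢
  subst hy4
  rw [pow_four_sub_one_mul_pow_six_sub_one_sub_factorization]
  exact ⟨rfl, by positivity⟩
end

section
/- The function y ↦ √((2/3) y (y + √y + 1)/(√y + 1)) is strictly monotone increasing on (0, ∞). (For y ≠ 1 this function equals √((2/3)(y^{3/2} − 1) y/(y − 1)).) -/
/-!
Substitute s = √y. Since (s² + s + 1)/(s + 1) = s + 1/(s + 1), the radicand is (2/3)·s²·(s + 1/(s + 1)),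
a product of two positive factors that increase strictly for s > 0: going from s to t > s, the term
1/(s + 1) drops by (t - s)/((s + 1)(t + 1)) < t - s. The closed form for y ≠ 1 comes from
y^{3/2} - 1 = (s - 1)(s² + s + 1) and y - 1 = (s - 1)(s + 1).
-/

open Real Set

lemma strictMonoOn_add_inv_add_one : StrictMonoOn (fun s : ℝ => s + (s + 1)⁻¹) (Ici 0) := by
  intro s (hs : 0 ≤ s) t (ht : 0 ≤ t) hst
  have hprod : 1 < (s + 1) * (t + 1) := by nlinarith
  have hdrop : (s + 1)⁻¹ - (t + 1)⁻¹ < t - s := by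
    rw [inv_sub_inv (by positivity) (by positivity), div_lt_iff₀ (by positivity)]
    nlinarith [mul_lt_mul_of_pos_left hprod (sub_pos.2 hst)]
  simp only
  linarith

lemma div_add_one_eq_add_inv {s : ℝ} (hs : s + 1 ≠ 0) :
    (s ^ 2 + s + 1) / (s + 1) = s + (s + 1)⁻¹ := by
  field_simp

lemma strictMonoOn_sq_mul_div_add_one :
    StrictMonoOn (fun s : ℝ => s ^ 2 * (s ^ 2 + s + 1) / (s + 1)) (Ioi 0) := by
  intro s (hs : 0 < s) t (ht : 0 < t) hst
  simp only [mul_div_assoc, div_add_one_eq_add_inv (by positivity : s + 1 ≠ 0),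
    div_add_one_eq_add_inv (by positivity : t + 1 ≠ 0)]
  exact mul_lt_mul'' (pow_lt_pow_left₀ hst hs.le two_ne_zero)
    (strictMonoOn_add_inv_add_one (mem_Ici.2 hs.le) (mem_Ici.2 ht.le) hst)
    (by positivity) (by positivity)

lemma strictMonoOn_mul_add_sqrt_div :
    StrictMonoOn (fun y : ℝ => y * (y + √y + 1) / (√y + 1)) (Ioi 0) := by
  intro a (ha : 0 < a) b (hb : 0 < b) hab
  have h := strictMonoOn_sq_mul_div_add_one (sqrt_pos.2 ha) (sqrt_pos.2 hb)
    (sqrt_lt_sqrt ha.le hab)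
  simpa only [sq_sqrt ha.le, sq_sqrt hb.le] using h

lemma rpow_three_halves {y : ℝ} (hy : 0 ≤ y) : y ^ ((3 : ℝ) / 2) = √y ^ 3 := by
  rw [rpow_div_two_eq_sqrt _ hy]
  exact_mod_cast rpow_natCast (√y) 3

/-- The blood flow shock-speed function `y ↦ √((2/3) y (y + √y + 1)/(√y + 1))`
is strictly monotone increasing on `(0, ∞)`; for `y ≠ 1` it equals
`√((2/3)(y^{3/2} − 1) y/(y − 1))`. -/
theorem bfe_shock_speed_factor_strictMono :
    StrictMonoOn
      (fun y : ℝ => Real.sqrt ((2 / 3) * y * (y + Real.sqrt y + 1) / (Real.sqrt y + 1)))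
      (Set.Ioi 0) ∧
    ∀ y : ℝ, 0 < y → y ≠ 1 →
      Real.sqrt ((2 / 3) * y * (y + Real.sqrt y + 1) / (Real.sqrt y + 1))
        = Real.sqrt ((2 / 3) * (y ^ ((3 : ℝ) / 2) - 1) * y / (y - 1)) := by
  constructor
  · intro a (ha : 0 < a) b hb hab
    simp only [mul_assoc, mul_div_assoc]
    apply sqrt_lt_sqrt (by positivity)
    exact mul_lt_mul_of_pos_left
      (by simpa only [mul_div_assoc] using strictMonoOn_mul_add_sqrt_div ha hb hab) (by norm_num)
  · intro y hy hy1
    rw [rpow_three_halves hy.le, ← sq_sqrt hy.le, sqrt_sq (sqrt_nonneg y)]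
    congr 1
    rw [div_eq_div_iff (by positivity) (by rw [sq_sqrt hy.le]; exact sub_ne_zero.2 hy1)]
    ring
end

section
/- For every real y ≥ 0, the inequality (y − 1)(y^{3/2} − 1) ≥ (3/2) y (y^{1/4} − 1)² holds; in particular, for y > 1, y^{1/4} − 1 ≤ √((2/3)(y − 1)(y^{3/2} − 1)/y). -/
/-! With `t = y^{1/4}` we have `y = t⁴` and `y^{3/2} = t⁶`, and factoring `(t - 1)²` out of
`(t⁴ - 1)(t⁶ - 1)` leaves `(1 + t + t² + t³)(1 + t + ⋯ + t⁵)`, whose `t⁴`-coefficient is already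
`4 ≥ 3/2`; all other coefficients are nonnegative. The square-root bound is the first inequality
divided by `(3/2) y`. -/

lemma four_mul_pow_four_mul_sub_one_sq_le {t : ℝ} (ht : 0 ≤ t) :
    4 * t ^ 4 * (t - 1) ^ 2 ≤ (t ^ 4 - 1) * (t ^ 6 - 1) := by
  have h : (t ^ 4 - 1) * (t ^ 6 - 1) - 4 * t ^ 4 * (t - 1) ^ 2 =
      (t - 1) ^ 2 * (t ^ 8 + 2 * t ^ 7 + 3 * t ^ 6 + 4 * t ^ 5 + 4 * t ^ 3 + 3 * t ^ 2 + 2 * t + 1) := by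
    ring
  have : 0 ≤ (t - 1) ^ 2 *
      (t ^ 8 + 2 * t ^ 7 + 3 * t ^ 6 + 4 * t ^ 5 + 4 * t ^ 3 + 3 * t ^ 2 + 2 * t + 1) := by
    positivity
  linarith

lemma le_sqrt_div_of_mul_sq_le {a b c : ℝ} (hc : 0 < c) (h : c * a ^ 2 ≤ b) : a ≤ √(b / c) :=
  Real.le_sqrt_of_sq_le <| (le_div_iff₀ hc).2 <| by linarith

/-- For every real `y ≥ 0`, `(y − 1)(y^{3/2} − 1) ≥ (3/2) y (y^{1/4} − 1)²`;
in particular, for `y > 1`, `y^{1/4} − 1 ≤ √((2/3)(y − 1)(y^{3/2} − 1)/y)`. -/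
theorem bfe_characteristic_bound_reduced (y : ℝ) (hy : 0 ≤ y) :
    (y - 1) * (y ^ ((3 : ℝ) / 2) - 1) ≥ (3 / 2) * y * (y ^ ((1 : ℝ) / 4) - 1) ^ 2 ∧
    (1 < y →
      y ^ ((1 : ℝ) / 4) - 1
        ≤ Real.sqrt ((2 / 3) * (y - 1) * (y ^ ((3 : ℝ) / 2) - 1) / y)) := by
  set t := y ^ ((1 : ℝ) / 4)
  have ht : 0 ≤ t := Real.rpow_nonneg hy _
  have hy4 : y = t ^ 4 := by rw [← Real.rpow_mul_natCast hy]; norm_num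
  have hy6 : y ^ ((3 : ℝ) / 2) = t ^ 6 := by rw [← Real.rpow_mul_natCast hy]; norm_num
  have key : (3 / 2) * y * (t - 1) ^ 2 ≤ (y - 1) * (y ^ ((3 : ℝ) / 2) - 1) := by
    rw [hy6, hy4]
    have : 0 ≤ t ^ 4 * (t - 1) ^ 2 := by positivity
    linarith [four_mul_pow_four_mul_sub_one_sq_le ht]
  refine ⟨key, fun hy1 => le_sqrt_div_of_mul_sq_le (by linarith) ?_⟩
  linarith
end

section
/- For every real y ≥ 0, the algebraic identity (y − 1)(y^{3/2} − 1) − (3/2) y (y^{1/4} − 1)² = (1/2)(y^{1/4} − 1)² (2 + 4 y^{1/4} + 6 y^{1/2} + 8 y^{3/4} + 5 y + 8 y^{5/4} + 6 y^{3/2} + 4 y^{7/4} + 2 y²) holds; in particular the left-hand side is nonnegative for all y ≥ 0. -/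
/-! With `t = y^{1/4}` every power in the statement is an integral power of `t`, so the identity
is a polynomial identity in `t`; its right-hand side is visibly nonnegative for `t ≥ 0`. -/

lemma characteristic_poly_factorization (t : ℝ) :
    (t ^ 4 - 1) * (t ^ 6 - 1) - (3 / 2) * t ^ 4 * (t - 1) ^ 2
      = (1 / 2) * (t - 1) ^ 2 * (2 + 4 * t + 6 * t ^ 2 + 8 * t ^ 3 + 5 * t ^ 4 + 8 * t ^ 5
          + 6 * t ^ 6 + 4 * t ^ 7 + 2 * (t ^ 4) ^ 2) := by
  ring

lemma characteristic_poly_factorization_nonneg {t : ℝ} (ht : 0 ≤ t) :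
    0 ≤ (1 / 2) * (t - 1) ^ 2 * (2 + 4 * t + 6 * t ^ 2 + 8 * t ^ 3 + 5 * t ^ 4 + 8 * t ^ 5
          + 6 * t ^ 6 + 4 * t ^ 7 + 2 * (t ^ 4) ^ 2) := by
  lift t to NNReal using ht
  positivity

/-- For every real `y ≥ 0`,
`(y − 1)(y^{3/2} − 1) − (3/2) y (y^{1/4} − 1)²
 = (1/2)(y^{1/4} − 1)² (2 + 4 y^{1/4} + 6 y^{1/2} + 8 y^{3/4} + 5 y + 8 y^{5/4}
    + 6 y^{3/2} + 4 y^{7/4} + 2 y²)`;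
in particular the left-hand side is nonnegative. -/
theorem bfe_characteristic_factorization (y : ℝ) (hy : 0 ≤ y) :
    (y - 1) * (y ^ ((3 : ℝ) / 2) - 1) - (3 / 2) * y * (y ^ ((1 : ℝ) / 4) - 1) ^ 2
      = (1 / 2) * (y ^ ((1 : ℝ) / 4) - 1) ^ 2
          * (2 + 4 * y ^ ((1 : ℝ) / 4) + 6 * y ^ ((1 : ℝ) / 2) + 8 * y ^ ((3 : ℝ) / 4)
              + 5 * y + 8 * y ^ ((5 : ℝ) / 4) + 6 * y ^ ((3 : ℝ) / 2)
              + 4 * y ^ ((7 : ℝ) / 4) + 2 * y ^ 2) ∧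
    0 ≤ (y - 1) * (y ^ ((3 : ℝ) / 2) - 1) - (3 / 2) * y * (y ^ ((1 : ℝ) / 4) - 1) ^ 2 := by
  set t := y ^ ((1 : ℝ) / 4)
  have pow_t (k : ℕ) (r : ℝ) (hr : r = 1 / 4 * k) : y ^ r = t ^ k := by
    rw [hr, Real.rpow_mul_natCast hy]
  have h1 : y ^ ((1 : ℝ) / 2) = t ^ 2 := pow_t 2 _ (by norm_num)
  have h3 : y ^ ((3 : ℝ) / 4) = t ^ 3 := pow_t 3 _ (by norm_num)
  have h5 : y ^ ((5 : ℝ) / 4) = t ^ 5 := pow_t 5 _ (by norm_num)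
  have h6 : y ^ ((3 : ℝ) / 2) = t ^ 6 := pow_t 6 _ (by norm_num)
  have h7 : y ^ ((7 : ℝ) / 4) = t ^ 7 := pow_t 7 _ (by norm_num)
  have h4 : y = t ^ 4 := (Real.rpow_one y).symm.trans (pow_t 4 1 (by norm_num))
  rw [h1, h3, h5, h6, h7, h4, characteristic_poly_factorization]
  exact ⟨rfl, characteristic_poly_factorization_nonneg (Real.rpow_nonneg hy _)⟩
end

section
/- Let γ > 0, 0 < A_L < A_*, let c(A) = √(3γ/2) · A^{1/4}, and suppose u_* = u_L − √(γ (A_* − A_L)(A_*^{3/2} − A_L^{3/2})/(A_L A_*)) (the Rankine–Hugoniot jump relation across a left shock). Then u_* + c(A_*) ≤ u_L + c(A_L), i.e., the characteristic speed u_* + c_* in the star region is bounded above by u_L + c_L. -/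
/-!
With `a = A_L^{1/4}` and `b = A_*^{1/4}` the claim reads
`ζ (b - a) ≤ √(γ (b⁴ - a⁴)(b⁶ - a⁶) / (a⁴ b⁴))`. Squaring and factoring
`(b⁴ - a⁴)(b⁶ - a⁶) = (b - a)² (b³ + ⋯ + a³)(b⁵ + ⋯ + a⁵)` reduces it to
`(3/2) a⁴ b⁴ ≤ (b³ + ⋯ + a³)(b⁵ + ⋯ + a⁵)`, and the four monomials `a⁴ b⁴` of that product
already give `4 a⁴ b⁴`.
-/

open Real

lemma rpow_quarter_pow_four {x : ℝ} (hx : 0 ≤ x) : (x ^ ((1 : ℝ) / 4)) ^ 4 = x := by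
  rw [← rpow_mul_natCast hx]
  norm_num

lemma rpow_quarter_pow_six {x : ℝ} (hx : 0 ≤ x) : (x ^ ((1 : ℝ) / 4)) ^ 6 = x ^ ((3 : ℝ) / 2) := by
  rw [← rpow_mul_natCast hx]
  norm_num

lemma four_mul_sq_sub_mul_le_pow_four_sub_mul_pow_six_sub {a b : ℝ} (ha : 0 ≤ a) (hb : 0 ≤ b) :
    4 * (b - a) ^ 2 * (a ^ 4 * b ^ 4) ≤ (b ^ 4 - a ^ 4) * (b ^ 6 - a ^ 6) := by
  have hfactor : (b ^ 4 - a ^ 4) * (b ^ 6 - a ^ 6) = (b - a) ^ 2 *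
      ((b ^ 3 + b ^ 2 * a + b * a ^ 2 + a ^ 3)
        * (b ^ 5 + b ^ 4 * a + b ^ 3 * a ^ 2 + b ^ 2 * a ^ 3 + b * a ^ 4 + a ^ 5)) := by
    ring
  calc 4 * (b - a) ^ 2 * (a ^ 4 * b ^ 4) = (b - a) ^ 2 * (4 * (a ^ 4 * b ^ 4)) := by ring
    _ ≤ _ := by
      rw [hfactor]
      refine mul_le_mul_of_nonneg_left ?_ (sq_nonneg _)
      have hmonomial (i j : ℕ) : 0 ≤ a ^ i * b ^ j := by positivity
      linarith [hmonomial 0 8, hmonomial 1 7, hmonomial 2 6, hmonomial 3 5, hmonomial 5 3,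
        hmonomial 6 2, hmonomial 7 1, hmonomial 8 0]

lemma sqrt_mul_sub_le_sqrt_shock_jump {γ a b : ℝ} (hγ : 0 ≤ γ) (ha : 0 < a) (hab : a ≤ b) :
    √(3 * γ / 2) * b - √(3 * γ / 2) * a
      ≤ √(γ * (b ^ 4 - a ^ 4) * (b ^ 6 - a ^ 6) / (a ^ 4 * b ^ 4)) := by
  have hb : 0 < b := ha.trans_le hab
  calc √(3 * γ / 2) * b - √(3 * γ / 2) * a = √(3 * γ / 2 * (b - a) ^ 2) := by
        rw [sqrt_mul' _ (sq_nonneg _), sqrt_sq (sub_nonneg.2 hab), mul_sub]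
    _ ≤ _ := by
      gcongr
      rw [le_div_iff₀ (by positivity)]
      have hjump := mul_le_mul_of_nonneg_left
        (four_mul_sq_sub_mul_le_pow_four_sub_mul_pow_six_sub ha.le hb.le) hγ
      have hnonneg : 0 ≤ γ * ((b - a) ^ 2 * (a ^ 4 * b ^ 4)) := by positivity
      linarith

/-- Across a left shock of the blood flow equations (Rankine–Hugoniot jump
relation, `A_L < A_*`), with `c(A) = √(3γ/2) A^{1/4}`, the characteristic speed
`u_* + c(A_*)` in the star region is bounded above by `u_L + c(A_L)`. -/
theorem bfe_left_shock_characteristic_bound (γ AL Astar uL ustar : ℝ)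
    (hγ : 0 < γ) (hAL : 0 < AL) (hlt : AL < Astar)
    (hRH : ustar = uL - Real.sqrt (γ * (Astar - AL)
        * (Astar ^ ((3 : ℝ) / 2) - AL ^ ((3 : ℝ) / 2)) / (AL * Astar))) :
    ustar + Real.sqrt (3 * γ / 2) * Astar ^ ((1 : ℝ) / 4)
      ≤ uL + Real.sqrt (3 * γ / 2) * AL ^ ((1 : ℝ) / 4) := by
  have hAstar : 0 ≤ Astar := hAL.le.trans hlt.le
  have hjump := sqrt_mul_sub_le_sqrt_shock_jump hγ.le (rpow_pos_of_pos hAL _)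
    (rpow_le_rpow (z := 1 / 4) hAL.le hlt.le (by norm_num))
  rw [rpow_quarter_pow_four hAL.le, rpow_quarter_pow_four hAstar, rpow_quarter_pow_six hAL.le,
    rpow_quarter_pow_six hAstar] at hjump
  linarith
end
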